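/- Suppose φ : G → R is a nonzero positive homomorphism and s > 0 satisfies φ ∘ γ_* = s·φ with s ≠ 1. Then s/(1+s) ∈ F_1 and there is r > 0 with φ((x_n)_n) = r·Σ_{n∈Z} x_n(s/(1+s)) for all (x_n)_n ∈ G. -/

import Mathlib

open scoped BigOperators

noncomputable section

/-- The open interval `(0,1)` on which the functions of `G₀ = ℤ[t,t⁻¹,(1-t)⁻¹]` live. -/
def I01 : Set ℝ := Set.Ioo 0 1

/-- Membership in `G₀ = ℤ[t,t⁻¹,(1-t)⁻¹]`, viewed as continuous functions on `(0,1)`: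
`f ∈ G₀` iff `f(t) = p(t)/(tᵐ(1-t)ⁿ)` for some integer polynomial `p`. -/
def memG0 (f : I01 → ℝ) : Prop :=
  ∃ (p : Polynomial ℤ) (m n : ℕ),
    ∀ t : I01, f t = (Polynomial.aeval (t : ℝ) p) / ((t : ℝ) ^ m * (1 - (t : ℝ)) ^ n)

/-- The positive cone `G_F⁺ = {f ∈ G₀ : f > 0 on F} ∪ {0}`. -/
def memGFp (F : Set ℝ) (f : I01 → ℝ) : Prop :=
  memG0 f ∧ ((∀ t : I01, (t : ℝ) ∈ F → 0 < f t) ∨ f = 0)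

/-- Membership in `G = ⊕_{n ∈ ℤ} G₀` (finitely supported sequences of elements of `G₀`). -/
def memG (x : ℤ → I01 → ℝ) : Prop :=
  (∀ n : ℤ, memG0 (x n)) ∧ {n : ℤ | x n ≠ 0}.Finite

/-- `Σ_{n ∈ ℤ} αⁿ(xₙ)(t)`, where `α` is multiplication by `t/(1-t)`. -/
def sumAlpha (x : ℤ → I01 → ℝ) (t : I01) : ℝ :=
  ∑ᶠ n : ℤ, ((t : ℝ) / (1 - (t : ℝ))) ^ n * x n t

/-- `Σ_{n ∈ ℤ} xₙ(t)`. -/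
def sumPlain (x : ℤ → I01 → ℝ) (t : I01) : ℝ := ∑ᶠ n : ℤ, x n t

/-- The automorphism `γ₊ : G → G`, `γ₊((xₙ)ₙ) = (α(x_{n+1}))ₙ`. -/
def gammaStar (x : ℤ → I01 → ℝ) : ℤ → I01 → ℝ :=
  fun n t => ((t : ℝ) / (1 - (t : ℝ))) * x (n + 1) t

/-- The positive cone `G⁺` of `G` determined by `F` and `F₁`. -/
def memGplus (F F1 : Set ℝ) (x : ℤ → I01 → ℝ) : Prop :=
  memG x ∧
    (((∀ t : I01, (t : ℝ) ∈ F → 0 < sumAlpha x t) ∧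
      (∀ t : I01, (t : ℝ) ∈ F1 → 0 < sumPlain x t)) ∨ x = 0)

/-- The cone `G⁺⁺ = {0} ∪ {x ∈ G : Σₙ αⁿ(xₙ) > 0 on F}`. -/
def memGpp (F : Set ℝ) (x : ℤ → I01 → ℝ) : Prop :=
  memG x ∧ ((∀ t : I01, (t : ℝ) ∈ F → 0 < sumAlpha x t) ∨ x = 0)

/-- The sequence in `G` supported at `n = 0` with value `a`. -/
def delta0 (a : I01 → ℝ) : ℤ → I01 → ℝ := fun n => if n = 0 then a else 0


/-!
Write `u = t/(1-t)` (so `α` is multiplication by `u`), `δᵢ f` for the sequence carrying `f` in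
slot `i`, `ψ = φ ∘ δ₀`, `c = ψ(1)` and `t₀ = s/(1+s)`, the point where `u = s`. Equivariance
reads `s φ(δᵢ₊₁ f) = φ(δᵢ (u f))`.

Positivity of `φ` extends to real combinations: if `x₀ + Σ aⱼ eⱼ`, with `aⱼ` real and `eⱼ ≥ 0`,
satisfies the strict inequalities defining `G⁺`, then `φ x₀ + Σ aⱼ φ eⱼ ≥ 0`; apply positivity
to `Q x₀ + Σ ⌈Q aⱼ⌉ eⱼ` and let `Q → ∞`. For `eⱼ = δᵢ(uᵏ)` such a combination is a real
polynomial `P(X, Y) = Σ aⱼ Xᵏ Yⁱ`, whose two sums are `P(u, u)` and `P(u, 1)`.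

Suitable polynomials show in turn that `ψ((u - s)²) ≤ 0`, then that `ψ h ≥ r c` whenever
`r < h t₀` (the term `C (u - s)²` makes `h - r` positive away from `t₀`), so `ψ h = c h(t₀)` and,
by equivariance, `φ x = c Σₙ xₙ(t₀)`. Finally `P = -1 - N + N Y + M (X - s)²` with
`N (s - 1) = 2` and `M` large is positive where it must be whenever `t₀ ∉ F₁`, but
`P(s, 1) = -1`.
-/

open Set Filter Topology

def odds (t : I01) : ℝ := (t : ℝ) / (1 - t)

lemma one_sub_coe_pos (t : I01) : 0 < 1 - (t : ℝ) := sub_pos.2 t.2.2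

lemma odds_pos (t : I01) : 0 < odds t := div_pos t.2.1 (one_sub_coe_pos t)

lemma abs_sub_le_abs_odds_sub (t t' : I01) : |(t : ℝ) - t'| ≤ |odds t - odds t'| := by
  have h₁ := one_sub_coe_pos t
  have h₂ := one_sub_coe_pos t'
  have hodds : odds t - odds t' = ((t : ℝ) - t') / ((1 - t) * (1 - t')) := by
    simp only [odds]
    field_simp
    ring
  rw [hodds, abs_div, abs_of_pos (mul_pos h₁ h₂)]
  exact le_div_self (abs_nonneg _) (mul_pos h₁ h₂) (by nlinarith [t.2.1, t'.2.1])

lemma subset_I01 {K : Set ℝ} (hK : K ⊆ Icc 0 1) (h0 : (0 : ℝ) ∉ K) (h1 : (1 : ℝ) ∉ K) :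
    K ⊆ I01 := fun x hx => by
  rw [I01, ← Icc_sdiff_both]
  exact ⟨hK hx, by rintro (rfl | rfl) <;> contradiction⟩

def G0 : Subring (I01 → ℝ) where
  carrier := {f | memG0 f}
  zero_mem' := ⟨0, 0, 0, fun t => by simp⟩
  one_mem' := ⟨1, 0, 0, fun t => by simp⟩
  neg_mem' := by
    rintro f ⟨p, m, n, hp⟩
    exact ⟨-p, m, n, fun t => by simp [hp, neg_div]⟩
  add_mem' := by
    rintro f g ⟨p, m, n, hp⟩ ⟨q, m', n', hq⟩
    refine ⟨p * (.X ^ m' * (1 - .X) ^ n') + q * (.X ^ m * (1 - .X) ^ n), m + m', n + n',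
      fun t => ?_⟩
    have h₀ : (t : ℝ) ≠ 0 := t.2.1.ne'
    have h₁ : 1 - (t : ℝ) ≠ 0 := (one_sub_coe_pos t).ne'
    simp only [Pi.add_apply, hp, hq, map_add, map_mul, map_pow, map_sub, map_one,
      Polynomial.aeval_X]
    field_simp
    ring
  mul_mem' := by
    rintro f g ⟨p, m, n, hp⟩ ⟨q, m', n', hq⟩
    refine ⟨p * q, m + m', n + n', fun t => ?_⟩
    simp only [Pi.mul_apply, hp, hq, map_mul]
    rw [div_mul_div_comm, pow_add, pow_add]
    ring

lemma odds_mem_G0 : odds ∈ G0 := ⟨.X, 0, 1, fun t => by simp [odds]⟩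

lemma odds_inv_mem_G0 : odds⁻¹ ∈ G0 := ⟨1 - .X, 1, 0, fun t => by simp [odds]⟩

lemma odds_mul_inv_mul (f : I01 → ℝ) : odds * (odds⁻¹ * f) = f := by
  ext t
  simp [(odds_pos t).ne']

lemma continuous_of_mem_G0 {f : I01 → ℝ} (hf : f ∈ G0) : Continuous f := by
  obtain ⟨p, m, n, hp⟩ := hf
  rw [funext hp]
  refine ((p.continuous_aeval).comp continuous_subtype_val).div (by fun_prop) fun t => ?_
  exact mul_ne_zero (pow_ne_zero _ t.2.1.ne') (pow_ne_zero _ (one_sub_coe_pos t).ne')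

lemma exists_abs_le_of_mem_G0 {f : I01 → ℝ} (hf : f ∈ G0) {K : Set ℝ} (hK : IsCompact K)
    (hKI : K ⊆ I01) : ∃ B, ∀ t : I01, (t : ℝ) ∈ K → |f t| ≤ B := by
  have hK' : IsCompact (Subtype.val ⁻¹' K : Set I01) := by
    rwa [Subtype.isCompact_iff, Subtype.image_preimage_coe, inter_eq_right.2 hKI]
  obtain ⟨B, hB⟩ := hK'.exists_bound_of_continuousOn (continuous_of_mem_G0 hf).continuousOn
  exact ⟨B, fun t ht => hB t ht⟩

def G : AddSubgroup (ℤ → I01 → ℝ) where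
  carrier := {x | memG x}
  zero_mem' := ⟨fun _ => G0.zero_mem, by simp⟩
  add_mem' := fun hx hy => ⟨fun n => G0.add_mem (hx.1 n) (hy.1 n),
    (hx.2.union hy.2).subset (Function.support_add _ _)⟩
  neg_mem' := fun hx => ⟨fun n => G0.neg_mem (hx.1 n), by simpa using hx.2⟩

lemma single_mem_G (i : ℤ) {f : I01 → ℝ} (hf : f ∈ G0) : Pi.single i f ∈ G := by
  refine ⟨fun n => ?_, (finite_singleton i).subset Pi.support_single_subset⟩
  show (Pi.single i f : ℤ → I01 → ℝ) n ∈ G0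
  rcases eq_or_ne n i with rfl | h
  · simpa using hf
  · simp [h]

lemma eq_sum_single_of_mem_G {x : ℤ → I01 → ℝ} (hx : x ∈ G) :
    x = ∑ i ∈ hx.2.toFinset, Pi.single i (x i) := by
  ext n : 1
  rw [Finset.sum_apply, Finset.sum_pi_single]
  split_ifs with h
  · rfl
  · simpa using h

lemma G_addMonoidHom_ext {f g : G →+ ℝ}
    (h : ∀ (i : ℤ) (a : I01 → ℝ) (ha : a ∈ G0),
      f ⟨Pi.single i a, single_mem_G i ha⟩ = g ⟨Pi.single i a, single_mem_G i ha⟩) :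
    f = g := by
  ext ⟨x, hx⟩
  have : (⟨x, hx⟩ : G) = ∑ i ∈ hx.2.toFinset, ⟨Pi.single i (x i), single_mem_G i (hx.1 i)⟩ :=
    Subtype.ext <| by rw [AddSubmonoidClass.coe_finsetSum]; exact eq_sum_single_of_mem_G hx
  simp only [this, map_sum]
  exact Finset.sum_congr rfl fun i _ => h i _ (hx.1 i)

lemma gammaStar_single (i : ℤ) (f : I01 → ℝ) :
    gammaStar (Pi.single (i + 1) f) = Pi.single i (odds * f) := by
  ext n t
  rcases eq_or_ne n i with rfl | h
  · simp [gammaStar, odds]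
  · simp [gammaStar, h]

def monomial (i : ℤ) (k : ℕ) : ℤ → I01 → ℝ := Pi.single i (odds ^ k)

lemma monomial_mem_G (i : ℤ) (k : ℕ) : monomial i k ∈ G :=
  single_mem_G i (G0.pow_mem odds_mem_G0 k)

lemma monomial_nonneg (i : ℤ) (k : ℕ) : 0 ≤ monomial i k :=
  Pi.single_nonneg.2 fun t => pow_nonneg (odds_pos t).le k

lemma support_apply_subset (x : ℤ → I01 → ℝ) (t : I01) :
    Function.support (fun n => x n t) ⊆ Function.support x :=
  fun n hn h => hn (by simp [h])

lemma sumAlpha_add {x y : ℤ → I01 → ℝ} (hx : x ∈ G) (hy : y ∈ G) (t : I01) :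
    sumAlpha (x + y) t = sumAlpha x t + sumAlpha y t := by
  simp only [sumAlpha, Pi.add_apply, mul_add]
  exact finsum_add_distrib
    (hx.2.subset ((Function.support_mul_subset_right _ _).trans (support_apply_subset x t)))
    (hy.2.subset ((Function.support_mul_subset_right _ _).trans (support_apply_subset y t)))

lemma sumPlain_add {x y : ℤ → I01 → ℝ} (hx : x ∈ G) (hy : y ∈ G) (t : I01) :
    sumPlain (x + y) t = sumPlain x t + sumPlain y t :=
  finsum_add_distrib (hx.2.subset (support_apply_subset x t))
    (hy.2.subset (support_apply_subset y t))

def sumAlphaHom (t : I01) : G →+ ℝ :=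
  AddMonoidHom.mk' (fun x => sumAlpha x t) fun x y => sumAlpha_add x.2 y.2 t

def sumPlainHom (t : I01) : G →+ ℝ :=
  AddMonoidHom.mk' (fun x => sumPlain x t) fun x y => sumPlain_add x.2 y.2 t

lemma sumAlpha_zero (t : I01) : sumAlpha 0 t = 0 := by simp [sumAlpha]

lemma sumPlain_zero (t : I01) : sumPlain 0 t = 0 := by simp [sumPlain]

lemma sumAlpha_nonneg {x : ℤ → I01 → ℝ} (hx : 0 ≤ x) (t : I01) : 0 ≤ sumAlpha x t :=
  finsum_nonneg fun n => mul_nonneg (zpow_nonneg (odds_pos t).le n) (hx n t)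

lemma sumPlain_nonneg {x : ℤ → I01 → ℝ} (hx : 0 ≤ x) (t : I01) : 0 ≤ sumPlain x t :=
  finsum_nonneg fun n => hx n t

lemma sumAlpha_single (i : ℤ) (f : I01 → ℝ) (t : I01) :
    sumAlpha (Pi.single i f) t = odds t ^ i * f t := by
  rw [sumAlpha, finsum_eq_single _ i fun n hn => by simp [hn]]
  simp only [Pi.single_eq_same, odds]

lemma sumPlain_single (i : ℤ) (f : I01 → ℝ) (t : I01) : sumPlain (Pi.single i f) t = f t := by
  rw [sumPlain, finsum_eq_single _ i fun n hn => by simp [hn]]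
  simp

section CeilCombination

variable {A ι : Type*} [AddCommGroup A] [Fintype ι]

def ceilCombination (Q : ℕ) (x₀ : A) (a : ι → ℝ) (e : ι → A) : A :=
  (Q : ℤ) • x₀ + ∑ j, ⌈Q * a j⌉ • e j

lemma map_ceilCombination (h : A →+ ℝ) (Q : ℕ) (x₀ : A) (a : ι → ℝ) (e : ι → A) :
    h (ceilCombination Q x₀ a e) = Q * h x₀ + ∑ j, (⌈Q * a j⌉ : ℝ) * h (e j) := by
  simp [ceilCombination, map_sum, map_zsmul]

lemma mul_le_map_ceilCombination (h : A →+ ℝ) (Q : ℕ) (x₀ : A) (a : ι → ℝ) {e : ι → A}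
    (he : ∀ j, 0 ≤ h (e j)) :
    Q * (h x₀ + ∑ j, a j * h (e j)) ≤ h (ceilCombination Q x₀ a e) := by
  rw [map_ceilCombination, mul_add, Finset.mul_sum]
  refine add_le_add_right (Finset.sum_le_sum fun j _ => ?_) _
  rw [← mul_assoc]
  exact mul_le_mul_of_nonneg_right (Int.le_ceil _) (he j)

lemma map_ceilCombination_le (h : A →+ ℝ) (Q : ℕ) (x₀ : A) (a : ι → ℝ) (e : ι → A) :
    h (ceilCombination Q x₀ a e) ≤ Q * (h x₀ + ∑ j, a j * h (e j)) + ∑ j, |h (e j)| := by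
  rw [map_ceilCombination, mul_add, Finset.mul_sum, add_assoc, ← Finset.sum_add_distrib]
  refine add_le_add_right (Finset.sum_le_sum fun j _ => ?_) _
  have h₀ : 0 ≤ (⌈Q * a j⌉ : ℝ) - Q * a j := sub_nonneg.2 (Int.le_ceil _)
  have h₁ : (⌈Q * a j⌉ : ℝ) - Q * a j ≤ 1 := by linarith [Int.ceil_lt_add_one (Q * a j)]
  nlinarith [neg_abs_le (h (e j)), le_abs_self (h (e j))]

end CeilCombination

lemma nonneg_of_forall_nat_mul_add_nonneg {v D : ℝ} (h : ∀ Q : ℕ, 0 ≤ (Q + 1) * v + D) :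
    0 ≤ v := by
  by_contra! hv
  obtain ⟨Q, hQ⟩ := exists_nat_gt (D / -v)
  have := h Q
  rw [div_lt_iff₀ (neg_pos.2 hv)] at hQ
  nlinarith

def AdditiveOnG (φ : (ℤ → I01 → ℝ) → ℝ) : Prop :=
  ∀ x y : ℤ → I01 → ℝ, memG x → memG y → φ (x + y) = φ x + φ y

def NonnegOnGplus (F F1 : Set ℝ) (φ : (ℤ → I01 → ℝ) → ℝ) : Prop :=
  ∀ x : ℤ → I01 → ℝ, memGplus F F1 x → 0 ≤ φ x

def IsGammaStarEigen (s : ℝ) (φ : (ℤ → I01 → ℝ) → ℝ) : Prop :=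
  ∀ x : ℤ → I01 → ℝ, memG x → φ (gammaStar x) = s * φ x

def secondMoment (φ : (ℤ → I01 → ℝ) → ℝ) (s : ℝ) : ℝ :=
  φ (monomial 0 2) - 2 * s * φ (monomial 0 1) + s ^ 2 * φ (monomial 0 0)

variable {F F1 : Set ℝ} {φ : (ℤ → I01 → ℝ) → ℝ} {s c : ℝ}

def AdditiveOnG.toAddMonoidHom (hφ : AdditiveOnG φ) : G →+ ℝ :=
  AddMonoidHom.mk' (fun x => φ x) fun x y => hφ x y x.2 y.2

lemma AdditiveOnG.map_zero (hφ : AdditiveOnG φ) : φ 0 = 0 :=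
  _root_.map_zero hφ.toAddMonoidHom

lemma AdditiveOnG.map_neg (hφ : AdditiveOnG φ) {x : ℤ → I01 → ℝ} (hx : x ∈ G) :
    φ (-x) = -φ x :=
  _root_.map_neg hφ.toAddMonoidHom ⟨x, hx⟩

lemma IsGammaStarEigen.mul_map_single_succ (hφ : IsGammaStarEigen s φ) (i : ℤ) {f : I01 → ℝ}
    (hf : f ∈ G0) : s * φ (Pi.single (i + 1) f) = φ (Pi.single i (odds * f)) := by
  rw [← hφ _ (single_mem_G _ hf), gammaStar_single]

theorem nonneg_of_real_combination (hadd : AdditiveOnG φ) (hpos : NonnegOnGplus F F1 φ)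
    {ι : Type*} [Fintype ι] (x₀ : G) (e : ι → G) (he : ∀ j, 0 ≤ (e j : ℤ → I01 → ℝ))
    (a : ι → ℝ)
    (hF : ∀ t : I01, (t : ℝ) ∈ F → 0 < sumAlpha x₀ t + ∑ j, a j * sumAlpha (e j) t)
    (hF1 : ∀ t : I01, (t : ℝ) ∈ F1 → 0 < sumPlain x₀ t + ∑ j, a j * sumPlain (e j) t) :
    0 ≤ φ x₀ + ∑ j, a j * φ (e j) := by
  refine nonneg_of_forall_nat_mul_add_nonneg (D := ∑ j, |φ (e j)|) fun Q => ?_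
  set y := ceilCombination (Q + 1) x₀ a e
  have hQ : (0 : ℝ) < (Q + 1 : ℕ) := by positivity
  have hy : memGplus F F1 y := ⟨y.2, Or.inl ⟨fun t ht => ?_, fun t ht => ?_⟩⟩
  · have := map_ceilCombination_le hadd.toAddMonoidHom (Q + 1) x₀ a e
    push_cast at this
    exact (hpos y hy).trans this
  · exact (mul_pos hQ (hF t ht)).trans_le
      (mul_le_map_ceilCombination (sumAlphaHom t) _ x₀ a fun j => sumAlpha_nonneg (he j) t)
  · exact (mul_pos hQ (hF1 t ht)).trans_le
      (mul_le_map_ceilCombination (sumPlainHom t) _ x₀ a fun j => sumPlain_nonneg (he j) t)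

theorem nonneg_of_monomial_combination (hadd : AdditiveOnG φ) (hpos : NonnegOnGplus F F1 φ)
    {ι : Type*} [Fintype ι] (x₀ : G) (m : ι → ℤ × ℕ) (a : ι → ℝ)
    (hF : ∀ t : I01, (t : ℝ) ∈ F →
      0 < sumAlpha x₀ t + ∑ j, a j * (odds t ^ (m j).1 * odds t ^ (m j).2))
    (hF1 : ∀ t : I01, (t : ℝ) ∈ F1 → 0 < sumPlain x₀ t + ∑ j, a j * odds t ^ (m j).2) :
    0 ≤ φ x₀ + ∑ j, a j * φ (monomial (m j).1 (m j).2) :=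
  nonneg_of_real_combination hadd hpos x₀ (fun j => ⟨_, monomial_mem_G (m j).1 (m j).2⟩)
    (fun j => monomial_nonneg _ _) a (by simpa [monomial, sumAlpha_single] using hF)
    (by simpa [monomial, sumPlain_single] using hF1)

lemma exists_sq_odds_sub_le (hs1 : s ≠ 1) (hF : IsCompact F) (hFI : F ⊆ I01) :
    ∃ W ≥ 1, ∀ t : I01, (t : ℝ) ∈ F → (odds t - s) ^ 2 ≤ W * (1 - s) ^ 2 * odds t ^ 2 := by
  obtain ⟨B, hB⟩ := exists_abs_le_of_mem_G0 odds_inv_mem_G0 hF hFI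
  refine ⟨1 + ((1 + |s| * B) / (1 - s)) ^ 2, le_add_of_nonneg_right (sq_nonneg _),
    fun t ht => ?_⟩
  have hu := odds_pos t
  have hBt : 1 ≤ B * odds t := by
    have := (le_abs_self _).trans (hB t ht)
    rwa [Pi.inv_apply, inv_le_iff_one_le_mul₀' hu, mul_comm] at this
  have h₁ : |odds t - s| ≤ (1 + |s| * B) * odds t := by
    have := abs_nonneg s
    calc |odds t - s| ≤ odds t + |s| := (abs_sub _ _).trans_eq (by rw [abs_of_pos hu])
      _ ≤ odds t + |s| * (B * odds t) := by nlinarith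
      _ = (1 + |s| * B) * odds t := by ring
  have h₂ : (1 + ((1 + |s| * B) / (1 - s)) ^ 2) * (1 - s) ^ 2
      = (1 - s) ^ 2 + (1 + |s| * B) ^ 2 := by
    have : (1 - s) ≠ 0 := sub_ne_zero.2 hs1.symm
    field_simp
  rw [h₂, ← sq_abs]
  nlinarith [abs_nonneg (odds t - s), sq_nonneg ((1 - s) * odds t)]

theorem secondMoment_nonpos (hadd : AdditiveOnG φ) (hpos : NonnegOnGplus F F1 φ)
    (heq : IsGammaStarEigen s φ) (hs1 : s ≠ 1) (hF : IsCompact F) (hFI : F ⊆ I01) :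
    secondMoment φ s ≤ 0 := by
  set c := φ (monomial 0 0)
  obtain ⟨W, hW1, hW⟩ := exists_sq_odds_sub_le hs1 hF hFI
  have h₁ : s * φ (monomial 1 1) = φ (monomial 0 2) :=
    heq.mul_map_single_succ 0 (G0.pow_mem odds_mem_G0 1) |>.trans (by simp [monomial, pow_succ])
  have h₂ : s * φ (monomial 2 0) = φ (monomial 1 1) :=
    heq.mul_map_single_succ 1 (G0.pow_mem odds_mem_G0 0) |>.trans (by simp [monomial])
  have key : ∀ δ > 0, secondMoment φ s ≤ δ * c := by
    intro δ hδ
    -- `P(X, Y) = δ - (X - s)² + W (X - s Y)²`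
    have := nonneg_of_monomial_combination hadd hpos 0 ![(0, 0), (0, 1), (0, 2), (1, 1), (2, 0)]
      ![δ - s ^ 2, 2 * s, W - 1, -2 * W * s, W * s ^ 2] (fun t ht => ?_) (fun t ht => ?_)
    · simp only [Fin.sum_univ_five, Matrix.cons_val_zero, Matrix.cons_val_one, Matrix.cons_val,
        ZeroMemClass.coe_zero, hadd.map_zero, zero_add] at this
      rw [secondMoment]
      linear_combination this - W * h₁ + W * s * h₂
    · have := hW t ht
      simp only [Fin.sum_univ_five, Matrix.cons_val_zero, Matrix.cons_val_one, Matrix.cons_val,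
        ZeroMemClass.coe_zero, sumAlpha_zero, zpow_ofNat, pow_zero, pow_one, mul_one]
      nlinarith
    · simp only [Fin.sum_univ_five, Matrix.cons_val_zero, Matrix.cons_val_one, Matrix.cons_val,
        ZeroMemClass.coe_zero, sumPlain_zero, pow_zero, pow_one, mul_one]
      nlinarith [mul_nonneg (sub_nonneg.2 hW1) (sq_nonneg (odds t - s))]
  have hlim : Tendsto (fun δ : ℝ => δ * c) (𝓝[>] 0) (𝓝 0) :=
    ((continuous_mul_const c).tendsto' 0 0 (zero_mul c)).mono_left nhdsWithin_le_nhds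
  exact ge_of_tendsto hlim (eventually_nhdsWithin_of_forall key)

lemma exists_forall_pos_sub_add_mul_sq {h : I01 → ℝ} (hh : h ∈ G0) {K : Set ℝ}
    (hK : IsCompact K) (hKI : K ⊆ I01) {t₀ : I01} {r : ℝ} (hr : r < h t₀) :
    ∃ C ≥ 0, ∀ t : I01, (t : ℝ) ∈ K → 0 < h t - r + C * (odds t - odds t₀) ^ 2 := by
  obtain ⟨ρ, hρ, hnear⟩ := Metric.eventually_nhds_iff.1 <|
    (continuous_of_mem_G0 hh).continuousAt.eventually_const_lt hr
  obtain ⟨B, hB⟩ := exists_abs_le_of_mem_G0 hh hK hKI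
  set C := (|r| + |B| + 1) / ρ ^ 2
  have hCρ : C * ρ ^ 2 = |r| + |B| + 1 := div_mul_cancel₀ _ (by positivity)
  refine ⟨C, by positivity, fun t ht => ?_⟩
  by_cases hd : dist t t₀ < ρ
  · have := hnear hd
    have : 0 ≤ C * (odds t - odds t₀) ^ 2 := by positivity
    linarith
  · have hfar : ρ ≤ |odds t - odds t₀| := by
      rw [not_lt, Subtype.dist_eq, Real.dist_eq] at hd
      exact hd.trans (abs_sub_le_abs_odds_sub t t₀)
    have : ρ ^ 2 ≤ (odds t - odds t₀) ^ 2 := by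
      simpa [sq_abs] using pow_le_pow_left₀ hρ.le hfar 2
    have : C * ρ ^ 2 ≤ C * (odds t - odds t₀) ^ 2 := by gcongr
    nlinarith [hB t ht, neg_abs_le (h t), le_abs_self r, le_abs_self B]

lemma mul_le_phi_single_zero (hadd : AdditiveOnG φ) (hpos : NonnegOnGplus F F1 φ)
    (hV : secondMoment φ s ≤ 0) (hK : IsCompact (F ∪ F1)) (hKI : F ∪ F1 ⊆ I01) {t₀ : I01}
    (ht₀ : odds t₀ = s) {h : I01 → ℝ} (hh : h ∈ G0) {r : ℝ} (hr : r < h t₀) :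
    r * φ (monomial 0 0) ≤ φ (Pi.single 0 h) := by
  obtain ⟨C, hC, hP⟩ := exists_forall_pos_sub_add_mul_sq hh hK hKI hr
  rw [ht₀] at hP
  have := nonneg_of_monomial_combination hadd hpos ⟨_, single_mem_G 0 hh⟩
    ![(0, 0), (0, 1), (0, 2)] ![C * s ^ 2 - r, -2 * C * s, C]
    (fun t ht => by
      simp only [Fin.sum_univ_three, Matrix.cons_val_zero, Matrix.cons_val_one, Matrix.cons_val,
        sumAlpha_single, zpow_zero, one_mul, pow_zero, pow_one, mul_one]
      linear_combination hP t (.inl ht))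
    (fun t ht => by
      simp only [Fin.sum_univ_three, Matrix.cons_val_zero, Matrix.cons_val_one, Matrix.cons_val,
        sumPlain_single, pow_zero, pow_one, mul_one]
      linear_combination hP t (.inr ht))
  simp only [Fin.sum_univ_three, Matrix.cons_val_zero, Matrix.cons_val_one, Matrix.cons_val] at this
  have hCV := mul_le_mul_of_nonneg_left hV hC
  rw [secondMoment, mul_zero] at hCV
  linarith

theorem phi_single_zero_eq_mul_eval (hadd : AdditiveOnG φ) (hpos : NonnegOnGplus F F1 φ)
    (hV : secondMoment φ s ≤ 0) (hK : IsCompact (F ∪ F1)) (hKI : F ∪ F1 ⊆ I01) {t₀ : I01}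
    (ht₀ : odds t₀ = s) {h : I01 → ℝ} (hh : h ∈ G0) :
    φ (Pi.single 0 h) = φ (monomial 0 0) * h t₀ := by
  have key : ∀ g ∈ G0, φ (monomial 0 0) * g t₀ ≤ φ (Pi.single 0 g) := fun g hg =>
    le_of_tendsto (((continuous_mul_const _).tendsto' _ _ (mul_comm _ _)).mono_left
      nhdsWithin_le_nhds) (eventually_nhdsWithin_of_forall (s := Iio (g t₀))
        fun r hr => mul_le_phi_single_zero hadd hpos hV hK hKI ht₀ hg hr)
  have := key (-h) (G0.neg_mem hh)
  rw [Pi.single_neg, hadd.map_neg (single_mem_G 0 hh), Pi.neg_apply] at this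
  exact le_antisymm (by linarith) (key h hh)

theorem phi_single_eq_mul_eval (heq : IsGammaStarEigen s φ) {t₀ : I01} (ht₀ : odds t₀ = s)
    (h₀ : ∀ f ∈ G0, φ (Pi.single 0 f) = c * f t₀) (i : ℤ) :
    ∀ f ∈ G0, φ (Pi.single i f) = c * f t₀ := by
  have hs : s ≠ 0 := ht₀ ▸ (odds_pos t₀).ne'
  induction i using Int.induction_on with
  | zero => exact h₀
  | succ i ih =>
    intro f hf
    have := heq.mul_map_single_succ i hf
    rw [ih _ (G0.mul_mem odds_mem_G0 hf), Pi.mul_apply, ht₀] at this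
    exact mul_left_cancel₀ hs (this.trans (by ring))
  | pred i ih =>
    intro f hf
    have hf' := G0.mul_mem odds_inv_mem_G0 hf
    have := heq.mul_map_single_succ (-i - 1) hf'
    rw [sub_add_cancel, odds_mul_inv_mul, ih _ hf'] at this
    rw [← this]
    simp only [Pi.mul_apply, Pi.inv_apply, ht₀]
    field_simp

theorem phi_eq_mul_sumPlain (hadd : AdditiveOnG φ) (heq : IsGammaStarEigen s φ) {t₀ : I01}
    (ht₀ : odds t₀ = s) (h₀ : ∀ f ∈ G0, φ (Pi.single 0 f) = c * f t₀) {x : ℤ → I01 → ℝ}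
    (hx : x ∈ G) : φ x = c * sumPlain x t₀ := by
  have : hadd.toAddMonoidHom = c • sumPlainHom t₀ := G_addMonoidHom_ext fun i a ha => by
    simpa [AdditiveOnG.toAddMonoidHom, sumPlainHom, sumPlain_single]
      using phi_single_eq_mul_eval heq ht₀ h₀ i a ha
  exact congr($this ⟨x, hx⟩)

theorem mem_of_phi_eq_mul_sumPlain (hadd : AdditiveOnG φ) (hpos : NonnegOnGplus F F1 φ)
    (hs1 : s ≠ 1) (hF1 : IsCompact F1) {t₀ : I01} (ht₀ : odds t₀ = s) (hc : 0 < c)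
    (hrep : ∀ x ∈ G, φ x = c * sumPlain x t₀) : (t₀ : ℝ) ∈ F1 := by
  by_contra hnot
  obtain ⟨ρ, hρ, hdist⟩ := hF1.exists_forall_le' (f := fun x : ℝ => |x - t₀|) (by fun_prop)
    fun x hx => abs_pos.2 (sub_ne_zero.2 (ne_of_mem_of_not_mem hx hnot))
  have hfar : ∀ t : I01, (t : ℝ) ∈ F1 → ρ ≤ |odds t - s| :=
    fun t ht => ht₀ ▸ (hdist _ ht).trans (abs_sub_le_abs_odds_sub t t₀)
  set N := 2 / (s - 1)
  have hN : N * (s - 1) = 2 := div_mul_cancel₀ _ (sub_ne_zero.2 hs1)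
  set M := 2 / ρ ^ 2 + N ^ 2
  have hMρ : 2 ≤ M * ρ ^ 2 := by
    have : 0 ≤ N ^ 2 * ρ ^ 2 := by positivity
    simp only [M, add_mul, div_mul_cancel₀ _ (pow_ne_zero 2 hρ.ne')]
    linarith
  have hmono : ∀ i k, φ (monomial i k) = c * s ^ k := fun i k => by
    rw [hrep _ (monomial_mem_G i k), monomial, sumPlain_single, Pi.pow_apply, ht₀]
  -- `P(X, Y) = -1 - N + N Y + M (X - s)²`; with `z = u - s`, `P(u, u) = 1 + N z + M z²` and
  -- `P(u, 1) = -1 + M z²`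
  have := nonneg_of_monomial_combination hadd hpos 0 ![(0, 0), (1, 0), (0, 1), (0, 2)]
    ![-1 - N + M * s ^ 2, N, -2 * M * s, M] (fun t ht => ?_) (fun t ht => ?_)
  · simp only [Fin.sum_univ_four, Matrix.cons_val_zero, Matrix.cons_val_one, Matrix.cons_val,
      ZeroMemClass.coe_zero, hadd.map_zero, hmono, pow_zero, pow_one, mul_one, zero_add] at this
    nlinarith
  · simp only [Fin.sum_univ_four, Matrix.cons_val_zero, Matrix.cons_val_one, Matrix.cons_val,
      ZeroMemClass.coe_zero, sumAlpha_zero, zpow_ofNat, pow_zero, pow_one, mul_one, one_mul]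
    have hM : N ^ 2 ≤ M := le_add_of_nonneg_left (by positivity)
    nlinarith [sq_nonneg (N * (odds t - s) + 1 / 2),
      mul_le_mul_of_nonneg_right hM (sq_nonneg (odds t - s))]
  · simp only [Fin.sum_univ_four, Matrix.cons_val_zero, Matrix.cons_val_one, Matrix.cons_val,
      ZeroMemClass.coe_zero, sumPlain_zero, pow_zero, pow_one, mul_one]
    have : ρ ^ 2 ≤ (odds t - s) ^ 2 := by
      simpa [sq_abs] using pow_le_pow_left₀ hρ.le (hfar t ht) 2
    nlinarith [mul_le_mul_of_nonneg_left this (by positivity : (0 : ℝ) ≤ M)]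

theorem stmt13_general (F : Set ℝ) (hFc : IsClosed F)
    (hFsub : F ⊆ Set.Icc 0 1) (hF0 : (0:ℝ) ∉ F) (hF1 : (1:ℝ) ∉ F)
    (F1 : Set ℝ) (hF1c : IsClosed F1)
    (hF1sub : F1 ⊆ Set.Icc 0 1) (hF10 : (0:ℝ) ∉ F1) (hF11 : (1:ℝ) ∉ F1)
    (φ : (ℤ → I01 → ℝ) → ℝ)
    (hadd : ∀ x y : ℤ → I01 → ℝ, memG x → memG y → φ (x + y) = φ x + φ y)
    (hpos : ∀ x : ℤ → I01 → ℝ, memGplus F F1 x → 0 ≤ φ x)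
    (hnz : ∃ x : ℤ → I01 → ℝ, memG x ∧ φ x ≠ 0)
    (s : ℝ) (hs : 0 < s) (hs1 : s ≠ 1)
    (heq : ∀ x : ℤ → I01 → ℝ, memG x → φ (gammaStar x) = s * φ x) :
    s / (1 + s) ∈ F1 ∧
      ∃ t : I01, (t : ℝ) = s / (1 + s) ∧
        ∃ r : ℝ, 0 < r ∧ ∀ x : ℤ → I01 → ℝ, memG x → φ x = r * sumPlain x t := by
  have hF := isCompact_Icc.of_isClosed_subset hFc hFsub
  have hF1' := isCompact_Icc.of_isClosed_subset hF1c hF1sub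
  have hFI := subset_I01 hFsub hF0 hF1
  have hKI := union_subset hFI (subset_I01 hF1sub hF10 hF11)
  let t₀ : I01 :=
    ⟨s / (1 + s), div_pos hs (by linarith), (div_lt_one (by linarith)).2 (by linarith)⟩
  have ht₀ : odds t₀ = s := by
    simp only [odds, t₀]
    field_simp
    ring
  set c := φ (monomial 0 0)
  have hV := secondMoment_nonpos hadd hpos heq hs1 hF hFI
  have hrep : ∀ x ∈ G, φ x = c * sumPlain x t₀ := fun x =>
    phi_eq_mul_sumPlain hadd heq ht₀ fun f => phi_single_zero_eq_mul_eval hadd hpos hV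
      (hF.union hF1') hKI ht₀
  have hc : 0 < c := by
    refine lt_of_le_of_ne (hpos _ ⟨monomial_mem_G 0 0, Or.inl ⟨fun t _ => ?_, fun t _ => ?_⟩⟩) ?_
    · simp [monomial, sumAlpha_single]
    · simp [monomial, sumPlain_single]
    · rintro hc
      obtain ⟨x, hx, hφx⟩ := hnz
      exact hφx (by rw [hrep x hx, ← hc, zero_mul])
  exact ⟨mem_of_phi_eq_mul_sumPlain hadd hpos hs1 hF1' ht₀ hc hrep, t₀, rfl, c, hc, hrep⟩

/-- a nonzero positive homomorphism `φ : G → ℝ` with `φ ∘ γ₊ = s·φ`,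
`s > 0`, `s ≠ 1`, satisfies `s/(1+s) ∈ F₁` and `φ = r·ψ_{s/(1+s)}` for some `r > 0`. -/
theorem stmt13 (F : Set ℝ) (hFne : F.Nonempty) (hFc : IsClosed F)
    (hFsub : F ⊆ Set.Icc 0 1) (hF0 : (0:ℝ) ∉ F) (hF1 : (1:ℝ) ∉ F)
    (F1 : Set ℝ) (hF1c : IsClosed F1)
    (hF1sub : F1 ⊆ Set.Icc 0 1) (hF10 : (0:ℝ) ∉ F1) (hF11 : (1:ℝ) ∉ F1)
    (hhalf : ((1/2 : ℝ) ∉ F ∪ F1) ∨ ((1/2 : ℝ) ∈ F ∩ F1))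
    (φ : (ℤ → I01 → ℝ) → ℝ)
    (hadd : ∀ x y : ℤ → I01 → ℝ, memG x → memG y → φ (x + y) = φ x + φ y)
    (hpos : ∀ x : ℤ → I01 → ℝ, memGplus F F1 x → 0 ≤ φ x)
    (hnz : ∃ x : ℤ → I01 → ℝ, memG x ∧ φ x ≠ 0)
    (s : ℝ) (hs : 0 < s) (hs1 : s ≠ 1)
    (heq : ∀ x : ℤ → I01 → ℝ, memG x → φ (gammaStar x) = s * φ x) :
    s / (1 + s) ∈ F1 ∧
      ∃ t : I01, (t : ℝ) = s / (1 + s) ∧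
        ∃ r : ℝ, 0 < r ∧ ∀ x : ℤ → I01 → ℝ, memG x → φ x = r * sumPlain x t :=
  stmt13_general F hFc hFsub hF0 hF1 F1 hF1c hF1sub hF10 hF11 φ hadd hpos hnz s hs hs1 heq
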